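/- Let (D1, M) be a periodic first-derivative SBP operator with diagonal mass matrix (M symmetric positive definite and diagonal, M·D1 + D1ᵀ·M = 0), D2 a periodic second-derivative SBP operator with the same mass matrix (M·D2 = −A2, A2 symmetric positive semidefinite), and D4 a periodic fourth-derivative SBP operator with the same mass matrix (M·D4 = A4, A4 symmetric positive semidefinite). Set L = 4I − 5·D2 + D4; then L is invertible. For every differentiable u : ℝ → ℝ^m satisfying the Holm-Hone semidiscretization ∂ₜu = −L⁻¹·(D1·(u∘(L·u)) + (D1·u)∘(L·u)) for all t, the discrete Hamiltonian (1/2)·u(t)ᵀ·M·L·u(t) = (1/2)·u(t)ᵀ·M·(4I − 5·D2 + D4)·u(t) is constant in t. -/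

import Mathlib

/-!
Since `M` is diagonal it commutes with the componentwise product, so `M` applied to the
split-form flux `D1 (u ∘ L u) + (D1 u) ∘ L u` pairs with `u` as `uᵀ S (u ∘ L u) + (u ∘ L u)ᵀ S u`
for the skew-symmetric `S = M D1`, which vanishes. The time derivative of `uᵀ (M L) u` is
`2 uᵀ (M L) ∂ₜu` because `M L = 4 M + 5 A2 + A4` is symmetric, and `M L ∂ₜu` is minus `M` times
the flux; so the Hamiltonian has zero derivative. Positive definiteness of `M L` also makes `L`
invertible.
-/

open Matrix

variable {n : Type*} [Fintype n] {α : Type*} [CommRing α]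

theorem HasDerivAt.dotProduct {u v : ℝ → n → ℝ} {u' v' : n → ℝ} {t : ℝ}
    (hu : HasDerivAt u u' t) (hv : HasDerivAt v v' t) :
    HasDerivAt (fun s => u s ⬝ᵥ v s) (u' ⬝ᵥ v t + u t ⬝ᵥ v') t := by
  simp only [_root_.dotProduct, ← Finset.sum_add_distrib]
  exact HasDerivAt.fun_sum fun i _ => (hasDerivAt_pi.1 hu i).mul (hasDerivAt_pi.1 hv i)

theorem HasDerivAt.mulVec {m : Type*} [Fintype m] (A : Matrix m n ℝ) {u : ℝ → n → ℝ}
    {u' : n → ℝ} {t : ℝ} (hu : HasDerivAt u u' t) : HasDerivAt (fun s => A *ᵥ u s) (A *ᵥ u') t :=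
  (LinearMap.toContinuousLinearMap (mulVecLin A)).hasFDerivAt.comp_hasDerivAt t hu

theorem Matrix.IsSymm.dotProduct_mulVec_self_eq_of_hasDerivAt
    {Q : Matrix n n ℝ} (hQ : Q.IsSymm) {u u' : ℝ → n → ℝ} (hu : ∀ t, HasDerivAt u (u' t) t)
    (horth : ∀ t, u t ⬝ᵥ (Q *ᵥ u' t) = 0) (t₁ t₂ : ℝ) :
    u t₁ ⬝ᵥ (Q *ᵥ u t₁) = u t₂ ⬝ᵥ (Q *ᵥ u t₂) := by
  have hderiv : ∀ t, HasDerivAt (fun s => u s ⬝ᵥ (Q *ᵥ u s)) 0 t := fun t => by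
    have hsymm : u' t ⬝ᵥ (Q *ᵥ u t) = u t ⬝ᵥ (Q *ᵥ u' t) := by
      rw [dotProduct_comm, ← vecMul_transpose, ← dotProduct_mulVec, hQ.eq]
    simpa [hsymm, horth] using (hu t).dotProduct ((hu t).mulVec Q)
  exact is_const_of_deriv_eq_zero (fun t => (hderiv t).differentiableAt)
    (fun t => (hderiv t).deriv) t₁ t₂

theorem Matrix.IsDiag.mulVec_mul [DecidableEq n] {M : Matrix n n α} (hM : M.IsDiag)
    (x y : n → α) : M *ᵥ (x * y) = (M *ᵥ x) * y := by
  rw [← hM.diagonal_diag]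
  funext i
  simp [mulVec_diagonal, mul_assoc]

theorem dotProduct_mul_eq_mul_dotProduct (x p y : n → α) : x ⬝ᵥ (p * y) = (x * y) ⬝ᵥ p :=
  Finset.sum_congr rfl fun _ _ => by simp only [Pi.mul_apply]; ring

theorem dotProduct_mulVec_add_dotProduct_mulVec_of_transpose_eq_neg {S : Matrix n n α}
    (hS : Sᵀ = -S) (a b : n → α) : a ⬝ᵥ (S *ᵥ b) + b ⬝ᵥ (S *ᵥ a) = 0 := by
  rw [dotProduct_mulVec b, ← mulVec_transpose, dotProduct_comm _ a, hS, neg_mulVec,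
    dotProduct_neg, add_neg_cancel]

theorem dotProduct_mulVec_splitForm_eq_zero {M D : Matrix n n α} (hM : M.IsDiag)
    (hD : M * D + Dᵀ * M = 0) (x y : n → α) :
    x ⬝ᵥ (M *ᵥ (D *ᵥ (x * y) + (D *ᵥ x) * y)) = 0 := by
  classical
  have hskew : (M * D)ᵀ = -(M * D) := by
    rw [transpose_mul, hM.isSymm.eq, eq_neg_iff_add_eq_zero, add_comm, hD]
  calc x ⬝ᵥ (M *ᵥ (D *ᵥ (x * y) + (D *ᵥ x) * y))
      = x ⬝ᵥ ((M * D) *ᵥ (x * y)) + (x * y) ⬝ᵥ ((M * D) *ᵥ x) := by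
        rw [mulVec_add, dotProduct_add, mulVec_mulVec, hM.mulVec_mul,
          dotProduct_mul_eq_mul_dotProduct, mulVec_mulVec]
    _ = 0 := dotProduct_mulVec_add_dotProduct_mulVec_of_transpose_eq_neg hskew _ _

/-- For periodic SBP operators `D1`, `D2`, `D4` with a common diagonal symmetric
positive definite mass matrix `M`, the operator `L = 4I − 5 D2 + D4` is
invertible, and the Holm-Hone semidiscretization
`∂ₜu = −L⁻¹ (D1 (u∘(L u)) + (D1 u)∘(L u))` conserves the discrete Hamiltonian
`(1/2) uᵀ·M·(4I − 5 D2 + D4)·u`. -/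
theorem holm_hone_conserves_hamiltonian
    (m : ℕ) (D1 D2 D4 M A2 A4 : Matrix (Fin m) (Fin m) ℝ)
    (hM : M.PosDef) (hMdiag : M.IsDiag)
    (hD1 : M * D1 + D1ᵀ * M = 0)
    (hA2 : A2.PosSemidef)
    (hD2 : M * D2 = -A2)
    (hA4 : A4.PosSemidef)
    (hD4 : M * D4 = A4) :
    IsUnit (4 - (5 : ℝ) • D2 + D4) ∧
      ∀ u : ℝ → Fin m → ℝ,
        (∀ t, HasDerivAt u
          (-((4 - (5 : ℝ) • D2 + D4)⁻¹ *ᵥ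
            (D1 *ᵥ (u t * ((4 - (5 : ℝ) • D2 + D4) *ᵥ u t))
              + (D1 *ᵥ u t) * ((4 - (5 : ℝ) • D2 + D4) *ᵥ u t)))) t) →
        ∀ t₁ t₂ : ℝ,
          (1 / 2 : ℝ) * (u t₁ ⬝ᵥ ((M * (4 - (5 : ℝ) • D2 + D4)) *ᵥ u t₁))
            = (1 / 2 : ℝ) * (u t₂ ⬝ᵥ ((M * (4 - (5 : ℝ) • D2 + D4)) *ᵥ u t₂)) := by
  set L := 4 - (5 : ℝ) • D2 + D4
  have hML : M * L = (4 : ℝ) • M + (5 : ℝ) • A2 + A4 := by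
    rw [mul_add, mul_sub, Matrix.mul_smul, hD2, hD4, smul_neg, sub_neg_eq_add,
      ← diagonal_ofNat, ← smul_eq_mul_diagonal]
  have hPD : (M * L).PosDef := hML ▸
    ((hM.smul four_pos).add_posSemidef (hA2.smul (by norm_num))).add_posSemidef hA4
  have hL : IsUnit L := isUnit_of_mul_isUnit_right hPD.isUnit
  refine ⟨hL, fun u hu t₁ t₂ => congrArg _ ?_⟩
  refine (isHermitian_iff_isSymm.1 hPD.isHermitian).dotProduct_mulVec_self_eq_of_hasDerivAt
    hu (fun t => ?_) t₁ t₂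
  rw [mulVec_neg, mulVec_mulVec, mul_nonsing_inv_cancel_right _ _ (L.isUnit_iff_isUnit_det.1 hL),
    dotProduct_neg, dotProduct_mulVec_splitForm_eq_zero hMdiag hD1, neg_zero]
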